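/- arXiv:2005.11484 — 2 statements merged into one kernel-verified Lean document; each statement's English description precedes it below -/
import Mathlib

section
/- In a right uniform semigroup with at most one left zero element, every nonzero idempotent is a left identity. -/
/-!
The principal right ideal `eS` is a nonzero subact: were all its elements left zeros, `e` would
be a left zero, and then so would every `s * e`, forcing `s * e = e` by uniqueness, i.e. `e` would
be the zero. Left multiplication by `e` is an endomorphism of the right act `S` that fixes `eS`
pointwise, so it is injective on `eS`, hence injective by largeness; `e * (e * s) = e * s` then
gives `e * s = s`.
-/

universe u

/-- A right action of a semigroup `S` on a set `A`. -/
def IsRightAct (S : Type u) [Semigroup S] {A : Type u} (act : A → S → A) : Prop :=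
  ∀ (a : A) (s t : S), act a (s * t) = act (act a s) t

/-- An `S`-homomorphism between right `S`-acts. -/
def IsActHom {S : Type u} [Semigroup S] {A B : Type u} (actA : A → S → A)
    (actB : B → S → B) (f : A → B) : Prop :=
  ∀ (a : A) (s : S), f (actA a s) = actB (f a) s

/-- A zero element of a right `S`-act. -/
def IsZeroElem {S : Type u} [Semigroup S] {A : Type u} (act : A → S → A) (θ : A) : Prop :=
  ∀ s : S, act θ s = θ

/-- A subact of a right `S`-act. -/
def IsSubact {S : Type u} [Semigroup S] {A : Type u} (act : A → S → A) (B : Set A) : Prop :=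
  B.Nonempty ∧ ∀ b ∈ B, ∀ s : S, act b s ∈ B

/-- `B` is large in `A`: every `S`-homomorphism from `A` injective on `B` is injective. -/
def LargeIn {S : Type u} [Semigroup S] {A : Type u} (act : A → S → A) (B : Set A) : Prop :=
  ∀ (C : Type u) (actC : C → S → C), IsRightAct S actC →
    ∀ f : A → C, IsActHom act actC f → Set.InjOn f B → Function.Injective f

/-- A right `S`-act is uniform if every nonzero subact is large. -/
def UniformAct {S : Type u} [Semigroup S] {A : Type u} (act : A → S → A) : Prop :=
  ∀ B : Set A, IsSubact act B → (∃ b ∈ B, ¬ IsZeroElem act b) → LargeIn act B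

/-- A semigroup is right uniform if `S` as a right `S`-act over itself is uniform. -/
def RightUniform (S : Type u) [Semigroup S] : Prop :=
  UniformAct (fun (a : S) (s : S) => a * s)

section RightRegularAct

variable {S : Type u} [Semigroup S]

theorem isRightAct_mul : IsRightAct S (fun a s : S => a * s) :=
  fun a s t => (mul_assoc a s t).symm

theorem isActHom_mul_left (e : S) :
    IsActHom (fun a s : S => a * s) (fun a s : S => a * s) (e * ·) :=
  fun a s => (mul_assoc e a s).symm

theorem isSubact_range_mul_left (e : S) :
    IsSubact (fun a s : S => a * s) (Set.range (e * ·)) := by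
  refine ⟨⟨_, e, rfl⟩, ?_⟩
  rintro _ ⟨t, rfl⟩ s
  exact ⟨t * s, (mul_assoc e t s).symm⟩

theorem isZeroElem_mul_left {z : S} (hz : IsZeroElem (fun a s : S => a * s) z) (s : S) :
    IsZeroElem (fun a s : S => a * s) (s * z) :=
  fun t => by simp only [mul_assoc, hz t]

theorem exists_not_isZeroElem_range_mul_left
    (hz : ∀ z₁ z₂ : S, (∀ s : S, z₁ * s = z₁) → (∀ s : S, z₂ * s = z₂) → z₁ = z₂)
    {e : S} (he : e * e = e) (hne : ¬ ∀ s : S, e * s = e ∧ s * e = e) :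
    ∃ b ∈ Set.range (e * ·), ¬ IsZeroElem (fun a s : S => a * s) b := by
  by_contra! hall
  have he_zero : IsZeroElem (fun a s : S => a * s) e := hall e ⟨e, he⟩
  exact hne fun s => ⟨he_zero s, hz _ _ (isZeroElem_mul_left he_zero s) he_zero⟩

theorem injective_mul_left_of_largeIn {e : S} (he : e * e = e)
    (hlarge : LargeIn (fun a s : S => a * s) (Set.range (e * ·))) :
    Function.Injective (e * ·) := by
  refine hlarge S _ isRightAct_mul _ (isActHom_mul_left e) ?_
  rintro _ ⟨t, rfl⟩ _ ⟨u, rfl⟩ h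
  simpa only [← mul_assoc, he] using h

end RightRegularAct

theorem stmt11 {S : Type u} [Semigroup S] (hu : RightUniform S)
    (hz : ∀ z₁ z₂ : S, (∀ s : S, z₁ * s = z₁) → (∀ s : S, z₂ * s = z₂) → z₁ = z₂)
    (e : S) (he : e * e = e) (hne : ¬ ∀ s : S, e * s = e ∧ s * e = e) :
    ∀ s : S, e * s = s := by
  have hlarge := hu _ (isSubact_range_mul_left e) (exists_not_isZeroElem_range_mul_left hz he hne)
  intro s
  exact injective_mul_left_of_largeIn he hlarge (by simp only [← mul_assoc, he])
end

section
/- In any semigroup with ACC on right congruences, for each element c there exists n with ann(cⁿ) = ann(c^{2n}), and then the Rees congruence of the right ideal cⁿS intersects ann(cⁿ) trivially. -/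
universe u

/-- A right congruence on a semigroup. -/
def IsRightCongruence {S : Type u} [Semigroup S] (r : S → S → Prop) : Prop :=
  Equivalence r ∧ ∀ a b : S, r a b → ∀ s : S, r (a * s) (b * s)

/-- Ascending chain condition on right congruences. -/
def ACCRightCongruences (S : Type u) [Semigroup S] : Prop :=
  ∀ f : ℕ → (S → S → Prop), (∀ n, IsRightCongruence (f n)) →
    (∀ n, ∀ a b : S, f n a b → f (n + 1) a b) →
    ∃ N : ℕ, ∀ n : ℕ, N ≤ n → f n = f N

/-- `spow c n` is the power `c ^ (n + 1)` in a semigroup. -/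
def spow {S : Type u} [Semigroup S] (c : S) : ℕ → S
  | 0 => c
  | n + 1 => spow c n * c

/-- An element is left nilpotent if some power of it is a left zero. -/
def IsLeftNilpotent {S : Type u} [Semigroup S] (c : S) : Prop :=
  ∃ n : ℕ, ∀ s : S, spow c n * s = spow c n

/-- The right congruence annihilator of an element. -/
def annRel {S : Type u} [Semigroup S] (c : S) : S → S → Prop :=
  fun s t => c * s = c * t

/-!
The annihilators `ann(cⁿ)` form an ascending chain of right congruences, so by ACC they
stabilise at some `n`; in particular `ann(cⁿ) = ann(c²ⁿ)`. On the right ideal `cⁿS` this gives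
`cⁿ(cⁿs) = cⁿ(cⁿt) → c²ⁿs = c²ⁿt → cⁿs = cⁿt`, i.e. `ann(cⁿ)` is trivial there.
-/

section

variable {S : Type u} [Semigroup S]

lemma spow_succ_eq_mul (c : S) (n : ℕ) : spow c (n + 1) = c * spow c n := by
  induction n with
  | zero => rfl
  | succ k ih =>
    change spow c (k + 1) * c = c * (spow c k * c)
    rw [ih, mul_assoc]

lemma spow_mul_spow (c : S) (n m : ℕ) : spow c n * spow c m = spow c (n + m + 1) := by
  induction m with
  | zero => rfl
  | succ k ih =>
    change spow c n * (spow c k * c) = spow c (n + k + 1) * c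
    rw [← mul_assoc, ih]

lemma isRightCongruence_annRel (x : S) : IsRightCongruence (annRel x) :=
  ⟨⟨fun _ => rfl, Eq.symm, Eq.trans⟩, fun a b h s => by
    change x * (a * s) = x * (b * s)
    rw [← mul_assoc, ← mul_assoc, h]⟩

lemma annRel_mul_left {x s t : S} (y : S) (h : annRel x s t) : annRel (y * x) s t := by
  change y * x * s = y * x * t
  rw [mul_assoc, mul_assoc, h]

lemma exists_annRel_spow_eq (hacc : ACCRightCongruences S) (c : S) :
    ∃ N, ∀ n, N ≤ n → annRel (spow c n) = annRel (spow c N) :=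
  hacc (fun n => annRel (spow c n)) (fun _ => isRightCongruence_annRel _)
    fun n _ _ h => spow_succ_eq_mul c n ▸ annRel_mul_left c h

lemma mul_eq_mul_of_annRel_mul {x : S} (hx : annRel x = annRel (x * x)) {s t : S}
    (h : annRel x (x * s) (x * t)) : x * s = x * t := by
  have hxx : annRel (x * x) s t := by
    change x * x * s = x * x * t
    rwa [mul_assoc, mul_assoc]
  change annRel x s t
  rwa [hx]

end

theorem stmt16 {S : Type u} [Semigroup S] (hacc : ACCRightCongruences S) (c : S) :
    ∃ n : ℕ, annRel (spow c n) = annRel (spow c (2 * n + 1)) ∧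
      ∀ a b : S,
        ((a ∈ Set.range (fun s : S => spow c n * s) ∧
          b ∈ Set.range (fun s : S => spow c n * s)) ∨ a = b) →
        annRel (spow c n) a b → a = b := by
  obtain ⟨N, hN⟩ := exists_annRel_spow_eq hacc c
  have hstable : annRel (spow c N) = annRel (spow c (2 * N + 1)) :=
    (hN (2 * N + 1) (by omega)).symm
  refine ⟨N, hstable, ?_⟩
  have hsq : annRel (spow c N) = annRel (spow c N * spow c N) := by
    rwa [spow_mul_spow, ← two_mul]
  rintro a b (⟨⟨s, rfl⟩, ⟨t, rfl⟩⟩ | rfl) h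
  · exact mul_eq_mul_of_annRel_mul hsq h
  · rfl
end
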